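/- Let N ≥ 3 and set 2⋆ = 2N/(N−2). Let J : (0,∞) → ℝ be measurable with J(ϱ) ≥ 1 for all ϱ > 0, let φ : (0,∞) → [0,∞), and suppose the function τ(ϱ) := ϱ^{1/2⋆} φ(ϱ) is locally absolutely continuous on (0,∞) with lim_{ϱ→0⁺} τ(ϱ) = 0 and lim_{ϱ→∞} τ(ϱ) = 0. Let D > 0 and assume ∫₀^∞ ϱ · τ'(ϱ)² · J(ϱ) dϱ ≤ D/(2⋆)² and ∫₀^∞ φ(ϱ)² ϱ^{−2/N} J(ϱ) dϱ ≤ 1. Then sup_{ϱ>0} ϱ^{1/2⋆} · | φ(ϱ) − D^{1/4} ϱ^{−1/2⋆} | ≤ 2·D^{1/4}; equivalently, ‖φ(ϱ) − D^{1/4} ϱ^{−1/2⋆}‖_{L^{2⋆,∞}(0,∞)} ≤ 2·D^{1/4}. -/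

import Mathlib

/-!
With `τ = ϱ^{1/2⋆} φ` and `J ≥ 1`, the hypotheses give `∫ τ²/t ≤ 1` and `∫ t τ'² ≤ D/(2⋆)²`.
On `(ϱ e^{-L}, ϱ)`, where `∫ dt/t = L`, the first bound forces `τ ≤ L^{-1/2}` somewhere, and
Cauchy–Schwarz against `dt/t` bounds the rise of `τ` from there up to `ϱ` by `√(L D)/2⋆`.
For `L = 2⋆/√D` both terms equal `D^{1/4}/√2⋆`, so `0 ≤ τ(ϱ) ≤ 2 D^{1/4}`, and
`ϱ^{1/2⋆} |φ(ϱ) − D^{1/4} ϱ^{−1/2⋆}| = |τ(ϱ) − D^{1/4}| ≤ 2 D^{1/4}`.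
-/

open MeasureTheory
open scoped ENNReal

/-- The critical Sobolev exponent `2⋆ = 2N/(N-2)`. -/
noncomputable def twoStar (N : ℕ) : ℝ := 2 * (N : ℝ) / ((N : ℝ) - 2)

/-- The auxiliary function `τ(ϱ) = ϱ^{1/2⋆} φ(ϱ)`. -/
noncomputable def tauFun (N : ℕ) (φ : ℝ → ℝ) (ϱ : ℝ) : ℝ :=
  ϱ ^ ((1:ℝ) / twoStar N) * φ ϱ

open Real Set

lemma setLIntegral_ofReal_inv_Ioo {a b : ℝ} (ha : 0 < a) (hab : a ≤ b) :
    ∫⁻ t in Ioo a b, ENNReal.ofReal t⁻¹ = ENNReal.ofReal (log b - log a) := by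
  have hb : 0 < b := ha.trans_le hab
  have hint : IntegrableOn (fun t : ℝ => t⁻¹) (Ioo a b) :=
    (continuousOn_inv₀.mono fun t ht => (ha.trans_le ht.1).ne').integrableOn_Icc.mono_set
      Ioo_subset_Icc_self
  rw [← ofReal_integral_eq_lintegral_ofReal hint, integral_Ioc_eq_integral_Ioo.symm,
    ← intervalIntegral.integral_of_le hab, integral_inv_of_pos ha hb, log_div hb.ne' ha.ne']
  filter_upwards [ae_restrict_mem measurableSet_Ioo] with t ht
  exact inv_nonneg.2 (ha.trans ht.1).le

lemma ofReal_sq_mul_log_le_setLIntegral {g : ℝ → ℝ} {a b ε : ℝ} (ha : 0 < a) (hab : a ≤ b)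
    (hε : 0 ≤ ε) (hg : ∀ t ∈ Ioo a b, ε ≤ g t) :
    ENNReal.ofReal (ε ^ 2 * (log b - log a)) ≤ ∫⁻ t in Ioo a b, ENNReal.ofReal (g t ^ 2 / t) := by
  rw [ENNReal.ofReal_mul (sq_nonneg ε), ← setLIntegral_ofReal_inv_Ioo ha hab,
    ← lintegral_const_mul' _ _ ENNReal.ofReal_ne_top]
  refine setLIntegral_mono' measurableSet_Ioo fun t ht => ?_
  have ht0 : 0 < t := ha.trans ht.1
  rw [← ENNReal.ofReal_mul (sq_nonneg ε), ← div_eq_mul_inv]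
  gcongr
  exact hg t ht

lemma ENNReal.ofReal_rpow_one_half (x : ℝ) :
    ENNReal.ofReal x ^ (1 / 2 : ℝ) = ENNReal.ofReal √x := by
  rcases le_total 0 x with hx | hx
  · rw [ENNReal.ofReal_rpow_of_nonneg hx (by norm_num), sqrt_eq_rpow]
  · rw [ENNReal.ofReal_of_nonpos hx, sqrt_eq_zero'.2 hx, ENNReal.ofReal_zero,
      ENNReal.zero_rpow_of_pos (by norm_num)]

lemma lintegral_ofReal_abs_le_sqrt_mul_sqrt {α : Type*} [MeasurableSpace α] {μ : Measure α}
    {w h : α → ℝ} (hw : AEMeasurable w μ) (hh : AEMeasurable h μ) (hw_pos : ∀ᵐ x ∂μ, 0 < w x) :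
    ∫⁻ x, ENNReal.ofReal |h x| ∂μ ≤
      (∫⁻ x, ENNReal.ofReal (w x)⁻¹ ∂μ) ^ (1 / 2 : ℝ) *
        (∫⁻ x, ENNReal.ofReal (w x * h x ^ 2) ∂μ) ^ (1 / 2 : ℝ) := by
  set f : α → ℝ≥0∞ := fun x => ENNReal.ofReal (√(w x))⁻¹
  set g : α → ℝ≥0∞ := fun x => ENNReal.ofReal (√(w x) * |h x|)
  have hf : AEMeasurable f μ := (hw.sqrt.inv).ennreal_ofReal
  have hg : AEMeasurable g μ := (hw.sqrt.mul hh.abs).ennreal_ofReal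
  have hfg : ∀ᵐ x ∂μ, ENNReal.ofReal |h x| = (f * g) x := by
    filter_upwards [hw_pos] with x hx
    have : √(w x) ≠ 0 := (sqrt_pos.2 hx).ne'
    rw [Pi.mul_apply, ← ENNReal.ofReal_mul (by positivity), inv_mul_cancel_left₀ this]
  have hf2 : ∀ᵐ x ∂μ, f x ^ (2 : ℝ) = ENNReal.ofReal (w x)⁻¹ := by
    filter_upwards [hw_pos] with x hx
    rw [ENNReal.ofReal_rpow_of_nonneg (by positivity) zero_le_two, rpow_two, inv_pow,
      sq_sqrt hx.le]
  have hg2 : ∀ᵐ x ∂μ, g x ^ (2 : ℝ) = ENNReal.ofReal (w x * h x ^ 2) := by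
    filter_upwards [hw_pos] with x hx
    rw [ENNReal.ofReal_rpow_of_nonneg (by positivity) zero_le_two, rpow_two, mul_pow,
      sq_sqrt hx.le, sq_abs]
  rw [lintegral_congr_ae hfg, ← lintegral_congr_ae hf2, ← lintegral_congr_ae hg2]
  exact ENNReal.lintegral_mul_le_Lp_mul_Lq μ HolderConjugate.two_two hf hg

lemma intervalIntegral_le_sqrt_log_mul_sqrt {h : ℝ → ℝ} {a b B : ℝ} (hh : Measurable h)
    (ha : 0 < a) (hab : a ≤ b)
    (hB : ∫⁻ t in Ioo a b, ENNReal.ofReal (t * h t ^ 2) ≤ ENNReal.ofReal B) :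
    ∫ t in a..b, h t ≤ √(log b - log a) * √B := by
  have hpos : ∀ᵐ t ∂volume.restrict (Ioo a b), 0 < t := by
    filter_upwards [ae_restrict_mem measurableSet_Ioo] with t ht
    exact ha.trans ht.1
  have hCS := lintegral_ofReal_abs_le_sqrt_mul_sqrt (w := fun t => t) aemeasurable_id'
    hh.aemeasurable hpos
  rw [setLIntegral_ofReal_inv_Ioo ha hab, ENNReal.ofReal_rpow_one_half] at hCS
  have hbound : ∫⁻ t in Ioo a b, ENNReal.ofReal |h t| ≤ ENNReal.ofReal (√(log b - log a) * √B) := by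
    refine hCS.trans ?_
    rw [ENNReal.ofReal_mul (sqrt_nonneg _), ← ENNReal.ofReal_rpow_one_half B]
    gcongr
  calc ∫ t in a..b, h t = ∫ t in Ioc a b, h t := intervalIntegral.integral_of_le hab
    _ ≤ ‖∫ t in Ioc a b, h t‖ := le_abs_self _
    _ ≤ (∫⁻ t in Ioc a b, ENNReal.ofReal ‖h t‖).toReal := norm_integral_le_lintegral_norm _
    _ = (∫⁻ t in Ioo a b, ENNReal.ofReal |h t|).toReal := by
        rw [setLIntegral_congr Ioo_ae_eq_Ioc.symm]; rfl
    _ ≤ √(log b - log a) * √B :=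
        ENNReal.toReal_le_of_le_ofReal (by positivity) hbound

lemma le_sqrt_div_add_sqrt_mul {τ : ℝ → ℝ} {ϱ L A B : ℝ} (hϱ : 0 < ϱ) (hL : 0 < L)
    (hτ : ∀ a b : ℝ, 0 < a → a ≤ b → τ b - τ a = ∫ t in a..b, deriv τ t)
    (hA : ∫⁻ t in Ioi 0, ENNReal.ofReal (τ t ^ 2 / t) ≤ ENNReal.ofReal A)
    (hB : ∫⁻ t in Ioi 0, ENNReal.ofReal (t * deriv τ t ^ 2) ≤ ENNReal.ofReal B) :
    τ ϱ ≤ √(A / L) + √(L * B) := by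
  set a := ϱ * exp (-L)
  have ha : 0 < a := by positivity
  have haϱ : a < ϱ := mul_lt_of_lt_one_right hϱ (exp_lt_one_iff.2 (neg_lt_zero.2 hL))
  have hlog : log ϱ - log a = L := by
    rw [log_mul hϱ.ne' (exp_ne_zero _), log_exp]; ring
  have hIoo : ∀ {c}, 0 < c → Ioo c ϱ ⊆ Ioi 0 := fun hc t ht => hc.trans ht.1
  have hdip : ∀ ε, √(A / L) < ε → ∃ t ∈ Ioo a ϱ, τ t < ε := by
    intro ε hε
    have hε0 : 0 < ε := (sqrt_nonneg _).trans_lt hε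
    by_contra! hge
    have hle := (ofReal_sq_mul_log_le_setLIntegral ha haϱ.le hε0.le hge).trans
      ((lintegral_mono_set (hIoo ha)).trans hA)
    rw [hlog, ENNReal.ofReal_le_ofReal_iff'] at hle
    have hlt := (div_lt_iff₀ hL).1 ((sqrt_lt' hε0).1 hε)
    rcases hle with hle | hle <;> linarith [mul_pos (pow_pos hε0 2) hL]
  have hrise : ∀ t ∈ Ioo a ϱ, τ ϱ - τ t ≤ √(L * B) := by
    intro t ht
    have ht0 : 0 < t := ha.trans ht.1
    rw [hτ t ϱ ht0 ht.2.le, sqrt_mul hL.le]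
    calc ∫ s in t..ϱ, deriv τ s ≤ √(log ϱ - log t) * √B :=
          intervalIntegral_le_sqrt_log_mul_sqrt (measurable_deriv τ) ht0 ht.2.le
            ((lintegral_mono_set (hIoo ht0)).trans hB)
      _ ≤ √L * √B := by
          gcongr
          linarith [log_lt_log ha ht.1]
  rw [← sub_le_iff_le_add]
  refine le_of_forall_gt_imp_ge_of_dense fun ε hε => ?_
  obtain ⟨t, ht, hτt⟩ := hdip ε hε
  linarith [hrise t ht]

lemma one_le_twoStar {N : ℕ} (hN : 2 < N) : 1 ≤ twoStar N := by
  have hN' : (2 : ℝ) < N := by exact_mod_cast hN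
  rw [twoStar, le_div_iff₀ (by linarith)]
  linarith

lemma tauFun_sq_div {N : ℕ} (hN : 2 < N) (φ : ℝ → ℝ) {t : ℝ} (ht : 0 < t) :
    tauFun N φ t ^ 2 / t = φ t ^ 2 * t ^ (-(2 : ℝ) / N) := by
  have hN' : (2 : ℝ) < N := by exact_mod_cast hN
  have hexp : 1 / twoStar N * (2 : ℕ) - 1 = -(2 : ℝ) / N := by
    rw [twoStar]
    field_simp
    ring
  rw [tauFun, mul_pow, ← rpow_mul_natCast ht.le, ← hexp, rpow_sub ht, rpow_one]
  ring

lemma rpow_mul_abs_sub_mul_rpow_neg {ρ : ℝ} (hρ : 0 < ρ) (p x u : ℝ) :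
    ρ ^ p * |x - u * ρ ^ (-p)| = |ρ ^ p * x - u| := by
  conv_lhs => rw [← abs_of_pos (rpow_pos_of_pos hρ p)]
  rw [← abs_mul, mul_sub, mul_left_comm, ← rpow_add hρ, add_neg_cancel, rpow_zero, mul_one]

theorem stmt_14_general (N : ℕ) (hN : 3 ≤ N) (J φ : ℝ → ℝ)
    (hJ : ∀ ϱ : ℝ, 0 < ϱ → 1 ≤ J ϱ)
    (hφ0 : ∀ ϱ : ℝ, 0 < ϱ → 0 ≤ φ ϱ)
    (hτac : ∀ a b : ℝ, 0 < a → a ≤ b →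
      tauFun N φ b - tauFun N φ a = ∫ t in a..b, deriv (tauFun N φ) t)
    (D : ℝ) (hD : 0 < D)
    (hint1 : ∫⁻ ϱ in Set.Ioi (0:ℝ),
        ENNReal.ofReal (ϱ * (deriv (tauFun N φ) ϱ) ^ 2 * J ϱ) ≤
      ENNReal.ofReal (D / twoStar N ^ 2))
    (hint2 : ∫⁻ ϱ in Set.Ioi (0:ℝ),
        ENNReal.ofReal ((φ ϱ) ^ 2 * ϱ ^ (-(2:ℝ) / (N : ℝ)) * J ϱ) ≤ 1) :
    ∀ ϱ : ℝ, 0 < ϱ →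
      ϱ ^ ((1:ℝ) / twoStar N) *
        |φ ϱ - D ^ ((1:ℝ)/4) * ϱ ^ (-(1:ℝ) / twoStar N)| ≤ 2 * D ^ ((1:ℝ)/4) := by
  intro ϱ hϱ
  have hq : 1 ≤ twoStar N := one_le_twoStar hN
  have hA : ∫⁻ t in Ioi 0, ENNReal.ofReal (tauFun N φ t ^ 2 / t) ≤ ENNReal.ofReal 1 := by
    rw [ENNReal.ofReal_one]
    refine (setLIntegral_mono' measurableSet_Ioi fun t (ht : 0 < t) => ?_).trans hint2
    rw [tauFun_sq_div hN φ ht]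
    exact ENNReal.ofReal_le_ofReal (le_mul_of_one_le_right (by positivity) (hJ t ht))
  have hB : ∫⁻ t in Ioi 0, ENNReal.ofReal (t * deriv (tauFun N φ) t ^ 2) ≤
      ENNReal.ofReal (D / twoStar N ^ 2) := by
    refine (setLIntegral_mono' measurableSet_Ioi fun t (ht : 0 < t) => ?_).trans hint1
    exact ENNReal.ofReal_le_ofReal (le_mul_of_one_le_right (by positivity) (hJ t ht))
  have hτ_le : tauFun N φ ϱ ≤ 2 * D ^ ((1:ℝ)/4) := by
    calc tauFun N φ ϱ ≤ √(1 / (twoStar N / √D)) + √(twoStar N / √D * (D / twoStar N ^ 2)) :=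
          le_sqrt_div_add_sqrt_mul hϱ (by positivity) hτac hA hB
      _ = 2 * √(√D / twoStar N) := by
          have hq0 : twoStar N ≠ 0 := (zero_lt_one.trans_le hq).ne'
          have hD0 : √D ≠ 0 := (sqrt_pos.2 hD).ne'
          rw [one_div_div, show twoStar N / √D * (D / twoStar N ^ 2) = √D / twoStar N by
            field_simp; rw [sq_sqrt hD.le]]
          ring
      _ ≤ 2 * √√D := by gcongr; exact div_le_self (sqrt_nonneg D) hq
      _ = 2 * D ^ ((1:ℝ)/4) := by rw [sqrt_eq_rpow, sqrt_eq_rpow, ← rpow_mul hD.le]; norm_num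
  have hτ_nonneg : 0 ≤ tauFun N φ ϱ := mul_nonneg (rpow_nonneg hϱ.le _) (hφ0 ϱ hϱ)
  rw [neg_div, rpow_mul_abs_sub_mul_rpow_neg hϱ, ← tauFun, abs_le]
  constructor <;> linarith [rpow_pos_of_pos hD ((1:ℝ)/4)]

/-- Final step of the Hardy stability lemma: if
`∫₀^∞ ϱ τ'(ϱ)² J(ϱ) dϱ ≤ D/(2⋆)²` and `∫₀^∞ φ² ϱ^{-2/N} J dϱ ≤ 1`, with `J ≥ 1` and
`τ(ϱ) = ϱ^{1/2⋆} φ(ϱ)` locally absolutely continuous vanishing at `0⁺` and `∞`, then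
`sup_{ϱ>0} ϱ^{1/2⋆}|φ(ϱ) − D^{1/4} ϱ^{-1/2⋆}| ≤ 2 D^{1/4}`. -/
theorem stmt_14 (N : ℕ) (hN : 3 ≤ N) (J φ : ℝ → ℝ)
    (hJ : ∀ ϱ : ℝ, 0 < ϱ → 1 ≤ J ϱ)
    (hφ0 : ∀ ϱ : ℝ, 0 < ϱ → 0 ≤ φ ϱ)
    (hτac : ∀ a b : ℝ, 0 < a → a ≤ b →
      tauFun N φ b - tauFun N φ a = ∫ t in a..b, deriv (tauFun N φ) t)
    (hτ0 : Filter.Tendsto (tauFun N φ) (nhdsWithin 0 (Set.Ioi 0)) (nhds 0))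
    (hτtop : Filter.Tendsto (tauFun N φ) Filter.atTop (nhds 0))
    (D : ℝ) (hD : 0 < D)
    (hint1 : ∫⁻ ϱ in Set.Ioi (0:ℝ),
        ENNReal.ofReal (ϱ * (deriv (tauFun N φ) ϱ) ^ 2 * J ϱ) ≤
      ENNReal.ofReal (D / twoStar N ^ 2))
    (hint2 : ∫⁻ ϱ in Set.Ioi (0:ℝ),
        ENNReal.ofReal ((φ ϱ) ^ 2 * ϱ ^ (-(2:ℝ) / (N : ℝ)) * J ϱ) ≤ 1) :
    ∀ ϱ : ℝ, 0 < ϱ →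
      ϱ ^ ((1:ℝ) / twoStar N) *
        |φ ϱ - D ^ ((1:ℝ)/4) * ϱ ^ (-(1:ℝ) / twoStar N)| ≤ 2 * D ^ ((1:ℝ)/4) :=
  stmt_14_general N hN J φ hJ hφ0 hτac D hD hint1 hint2
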